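/- arXiv:math/0311103 — 2 statements merged into one kernel-verified Lean document; each statement's English description precedes it below -/
import Mathlib

section
/- Lemma 4: for all natural numbers m and k ≥ 1, if G(k, m) = (k+1)^l is a single-term hereditary base-(k+1) representation with coefficient 1 and exponent l satisfying l ≥ k+1, then G(k+1, m) > G(k, m). -/
/-- `hsub b u m` substitutes the value `u` for the base `b` throughout the
hereditary base-`b` representation of `m` (with `hsub b u 0 = 0`). -/
def hsub (b u : ℕ) (m : ℕ) : ℕ :=
  if m = 0 then 0
  else
    u ^ hsub b u (Nat.log b m) * (m / b ^ Nat.log b m) + hsub b u (m % b ^ Nat.log b m)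
termination_by m
decreasing_by
  · exact Nat.log_lt_self b (by assumption)
  · have hpos : 0 < b ^ Nat.log b m := by
      rcases Nat.eq_zero_or_pos b with hb | hb
      · simp [hb]
      · exact Nat.pow_pos hb
    exact lt_of_lt_of_le (Nat.mod_lt _ hpos) (Nat.pow_log_le_self b (by assumption))

/-- Goodstein's base-change ("bumping") function: replace the base `b` by `b + 1`
throughout the hereditary base-`b` representation of `m` (with `B b 0 = 0`). -/
def B (b m : ℕ) : ℕ := hsub b (b + 1) m

/-- The Goodstein sequence of `m`: `G 1 m = m`, and `G (k+1) m = B (k+1) (G k m) - 1`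
for `k ≥ 1` (truncated subtraction), so the `k`-th term is written in hereditary
base `k + 1`. -/
def G : ℕ → ℕ → ℕ
  | 0, m => m
  | 1, m => m
  | (k + 2), m => B (k + 2) (G (k + 1) m) - 1

/-- The auxiliary Goodstein-type sequence: `L 1 k = k ^ k` (written in hereditary
base `k`), and `L (n+1) k = B (k+n-1) (L n k) - 1` for `n ≥ 1` (truncated
subtraction), so the `n`-th term is written in hereditary base `k + n - 1`. -/
def L : ℕ → ℕ → ℕ
  | 0, k => k ^ k
  | 1, k => k ^ k
  | (n + 2), k => B (k + n) (L (n + 1) k) - 1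

/-- `O b m` is the ordinal obtained by substituting `ω` for the base `b`
throughout the hereditary base-`b` representation of `m` (with `O b 0 = 0`). -/
noncomputable def O (b : ℕ) (m : ℕ) : Ordinal :=
  if m = 0 then 0
  else
    Ordinal.omega0 ^ O b (Nat.log b m) * ((m / b ^ Nat.log b m : ℕ) : Ordinal)
      + O b (m % b ^ Nat.log b m)
termination_by m
decreasing_by
  · exact Nat.log_lt_self b (by assumption)
  · have hpos : 0 < b ^ Nat.log b m := by
      rcases Nat.eq_zero_or_pos b with hb | hb
      · simp [hb]
      · exact Nat.pow_pos hb
    exact lt_of_lt_of_le (Nat.mod_lt _ hpos) (Nat.pow_log_le_self b (by assumption))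


/-!
Bumping the base of the single power `(k+1)^l` gives `(k+2)^l'` with `l' ≥ l`, since base
change never decreases a number. As `l ≥ 2`, the gap `(k+2)^l - (k+1)^l` is at least `2`,
so it survives the subtraction of `1` in the Goodstein step.
-/

lemma hsub_zero (b u : ℕ) : hsub b u 0 = 0 := by
  rw [hsub, if_pos rfl]

lemma le_hsub {b u : ℕ} (hbu : b ≤ u) (m : ℕ) : m ≤ hsub b u m := by
  induction m using Nat.strong_induction_on with
  | _ m ih =>
    rcases eq_or_ne m 0 with rfl | hm
    · exact Nat.zero_le _
    rw [hsub, if_neg hm]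
    set e := Nat.log b m
    have hpow_le : b ^ e ≤ m := Nat.pow_log_le_self b hm
    have hpow_pos : 0 < b ^ e := by
      rcases Nat.eq_zero_or_pos b with rfl | hb
      · simp [e]
      · exact Nat.pow_pos hb
    have hexp : b ^ e ≤ u ^ hsub b u e := by
      rcases Nat.eq_zero_or_pos u with rfl | hu
      · obtain rfl : b = 0 := by omega
        simp [e, hsub_zero]
      · exact (Nat.pow_le_pow_left hbu e).trans
          (Nat.pow_le_pow_right hu (ih e (Nat.log_lt_self b hm)))
    have hrem : m % b ^ e ≤ hsub b u (m % b ^ e) :=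
      ih _ ((Nat.mod_lt _ hpow_pos).trans_le hpow_le)
    calc m = b ^ e * (m / b ^ e) + m % b ^ e := (Nat.div_add_mod m _).symm
      _ ≤ u ^ hsub b u e * (m / b ^ e) + hsub b u (m % b ^ e) :=
        Nat.add_le_add (Nat.mul_le_mul_right _ hexp) hrem

lemma hsub_pow {b : ℕ} (hb : 1 < b) (u l : ℕ) : hsub b u (b ^ l) = u ^ hsub b u l := by
  have hpos : 0 < b ^ l := Nat.pow_pos (by omega)
  rw [hsub, if_neg hpos.ne', Nat.log_pow hb, Nat.div_self hpos, Nat.mod_self, hsub_zero,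
    mul_one, add_zero]

lemma le_B (b m : ℕ) : m ≤ B b m :=
  le_hsub (Nat.le_succ b) m

lemma B_pow {b : ℕ} (hb : 1 < b) (l : ℕ) : B b (b ^ l) = (b + 1) ^ B b l :=
  hsub_pow hb _ l

lemma pow_add_one_lt_add_one_pow {a n : ℕ} (ha : 0 < a) (hn : 2 ≤ n) :
    a ^ n + 1 < (a + 1) ^ n := by
  induction n, hn using Nat.le_induction with
  | base => nlinarith
  | succ n _ ih =>
    calc a ^ (n + 1) + 1 < (a ^ n + 1) * (a + 1) := by rw [pow_succ]; nlinarith [pow_pos ha n]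
      _ ≤ (a + 1) ^ n * (a + 1) := Nat.mul_le_mul_right _ ih.le
      _ = (a + 1) ^ (n + 1) := (pow_succ _ _).symm

/-- **Lemma 4**: for `k ≥ 1`, if `G k m = (k+1)^l` is a single-term hereditary
base-`(k+1)` representation with coefficient `1` and exponent `l ≥ k+1`, then
`G (k+1) m > G k m`. -/
theorem goodstein_lemma4 (m k l : ℕ) (hk : 1 ≤ k) (hl : k + 1 ≤ l)
    (h : G k m = (k + 1) ^ l) :
    G k m < G (k + 1) m := by
  obtain ⟨k, rfl⟩ : ∃ k', k = k' + 1 := ⟨k - 1, by omega⟩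
  have hgap : (k + 2) ^ l + 1 < (k + 3) ^ l := pow_add_one_lt_add_one_pow (by omega) (by omega)
  calc G (k + 1) m = (k + 2) ^ l := h
    _ < (k + 3) ^ l - 1 := by omega
    _ ≤ (k + 3) ^ B (k + 2) l - 1 :=
      Nat.sub_le_sub_right (Nat.pow_le_pow_right (by omega) (le_B _ l)) 1
    _ = G (k + 2) m := by rw [G, h, B_pow (by omega)]
end

section
/- Lemma 8: for every natural number k ≥ 2, the sequence L(·, k) terminates; that is, there exists a natural number n ≥ 1 such that L(n, k) = 0. -/
/-! Replacing the base by `ω` turns each term into an ordinal. The map `O b` is strictly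
increasing for `b ≥ 2`, and bumping the base does not change it: `O (b + 1) (B b m) = O b m`.
Hence the ordinals `O (k + n) (L (n + 1) k)` strictly decrease as long as the terms are nonzero,
which cannot go on forever. -/

open Ordinal Set

universe u

lemma B_zero (b : ℕ) : B b 0 = 0 := by
  rw [B, hsub]; simp

lemma B_of_ne_zero (b : ℕ) {m : ℕ} (hm : m ≠ 0) :
    B b m = (b + 1) ^ B b (Nat.log b m) * (m / b ^ Nat.log b m) + B b (m % b ^ Nat.log b m) := by
  rw [B, hsub]; simp [hm, B]

lemma O_zero (b : ℕ) : O b 0 = 0 := by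
  rw [O]; simp

lemma O_of_ne_zero (b : ℕ) {m : ℕ} (hm : m ≠ 0) :
    O b m = ω ^ O b (Nat.log b m) * ((m / b ^ Nat.log b m : ℕ) : Ordinal) +
      O b (m % b ^ Nat.log b m) := by
  rw [O]; simp [hm]

namespace Nat

variable {b m : ℕ}

lemma div_pow_log_pos (hm : m ≠ 0) : 0 < m / b ^ log b m := by
  rcases b.eq_zero_or_pos with rfl | hb
  · simp [Nat.pos_of_ne_zero hm]
  · exact Nat.div_pos (pow_log_le_self b hm) (pow_pos hb _)

lemma div_pow_log_lt (hb : 1 < b) : m / b ^ log b m < b := by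
  rw [Nat.div_lt_iff_lt_mul (pow_pos (by omega) _), ← pow_succ']
  exact lt_pow_succ_log_self hb m

lemma log_pow_mul_add {e a r : ℕ} (ha : 0 < a) (hab : a < b) (hr : r < b ^ e) :
    log b (b ^ e * a + r) = e := by
  refine log_eq_of_pow_le_of_lt_pow (by nlinarith) ?_
  calc b ^ e * a + r < b ^ e * (a + 1) := by rw [mul_add_one]; omega
    _ ≤ b ^ e * b := Nat.mul_le_mul_left _ hab
    _ = b ^ (e + 1) := (pow_succ b e).symm

end Nat

variable {b : ℕ}

lemma O_pow_mul_add (hb : 1 < b) {e a r : ℕ} (ha : 0 < a) (hab : a < b) (hr : r < b ^ e) :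
    O b (b ^ e * a + r) = ω ^ O b e * (a : Ordinal) + O b r := by
  have hpow : 0 < b ^ e := pow_pos (zero_lt_one.trans hb) e
  rw [O_of_ne_zero b (by positivity), Nat.log_pow_mul_add ha hab hr,
    Nat.mul_add_div hpow, Nat.div_eq_of_lt hr, add_zero, Nat.mul_add_mod, Nat.mod_eq_of_lt hr]

/- Strict monotonicity of `O b` and the bound `O b m < ω ^ O b e` for `m < b ^ e` are proved
together: each one needs the other at smaller arguments. -/
lemma O_lt_omega0_opow_of_strictMonoOn (hb : 1 < b) {N e m : ℕ}
    (hmono : StrictMonoOn (O.{u} b) (Iio N)) (he : e < N) (hm : m < b ^ e) :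
    O.{u} b m < ω ^ O b e := by
  induction m using Nat.strong_induction_on generalizing e with
  | _ m ih =>
  rcases eq_or_ne m 0 with rfl | hm0
  · rw [O_zero]
    exact opow_pos _ omega0_pos
  have hlog : Nat.log b m < e := Nat.log_lt_of_lt_pow hm0 hm
  have hpow : 0 < b ^ Nat.log b m := pow_pos (zero_lt_one.trans hb) _
  have hrem : m % b ^ Nat.log b m < m := (Nat.mod_lt _ hpow).trans_le (Nat.pow_log_le_self b hm0)
  rw [O_of_ne_zero b hm0]
  exact opow_mul_add_lt_opow (natCast_lt_omega0 _)
    (ih _ hrem (hlog.trans he) (Nat.mod_lt _ hpow)) (hmono (hlog.trans he) he hlog)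

lemma O_lt_of_strictMonoOn (hb : 1 < b) {x y : ℕ} (hmono : StrictMonoOn (O.{u} b) (Iio y))
    (hxy : x < y) : O.{u} b x < O b y := by
  have hy : y ≠ 0 := by omega
  set e := Nat.log b y
  have he : e < y := Nat.log_lt_self b hy
  have hpow : 0 < b ^ e := pow_pos (zero_lt_one.trans hb) e
  have hOy := O_of_ne_zero b hy
  have hlead : ω ^ O b e ≤ O b y := by
    rw [hOy]
    exact (le_mul_left _ (mod_cast Nat.div_pow_log_pos hy)).trans le_self_add
  by_cases hx : x < b ^ e
  · exact (O_lt_omega0_opow_of_strictMonoOn hb hmono he hx).trans_le hlead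
  have hx0 : x ≠ 0 := by omega
  have hlog : Nat.log b x = e :=
    Nat.log_eq_of_pow_le_of_lt_pow (not_lt.mp hx) (hxy.trans (Nat.lt_pow_succ_log_self hb y))
  rw [O_of_ne_zero b hx0, hlog]
  rcases (Nat.div_le_div_right (c := b ^ e) hxy.le).lt_or_eq with hdiv | hdiv
  · have hrem := O_lt_omega0_opow_of_strictMonoOn hb hmono he (Nat.mod_lt x hpow)
    exact (opow_mul_add_lt_opow_mul hrem (mod_cast hdiv)).trans_le (hOy ▸ le_self_add)
  · have hrem : x % b ^ e < y % b ^ e := by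
      have := Nat.div_add_mod x (b ^ e)
      have := Nat.div_add_mod y (b ^ e)
      rw [hdiv] at *
      omega
    rw [hOy, hdiv]
    have hremy : y % b ^ e < y := (Nat.mod_lt y hpow).trans_le (Nat.pow_log_le_self b hy)
    exact add_lt_add_right (hmono (hrem.trans hremy) hremy hrem) _

theorem O_strictMono (hb : 1 < b) : StrictMono (O.{u} b) := by
  have hIio : ∀ N, StrictMonoOn (O.{u} b) (Iio N) := by
    intro N
    induction N with
    | zero => exact fun x hx ↦ absurd hx (Nat.not_lt_zero x)
    | succ N ih =>
      intro x hx y hy hxy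
      rcases (Nat.lt_succ_iff.mp hy).lt_or_eq with hy | rfl
      · exact ih (hxy.trans hy) hy hxy
      · exact O_lt_of_strictMonoOn hb ih hxy
  exact fun x y hxy ↦ hIio (y + 1) (hxy.trans (lt_add_one y)) (lt_add_one y) hxy

lemma O_lt_omega0_opow (hb : 1 < b) {e m : ℕ} (hm : m < b ^ e) : O.{u} b m < ω ^ O b e :=
  O_lt_omega0_opow_of_strictMonoOn hb ((O_strictMono hb).strictMonoOn _) (lt_add_one e) hm

lemma lt_pow_of_O_lt_omega0_opow (hb : 1 < b) {e m : ℕ} (h : O.{u} b m < ω ^ O b e) :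
    m < b ^ e := by
  have hpow : O.{u} b (b ^ e) = ω ^ O b e := by
    simpa [O_zero] using O_pow_mul_add hb one_pos hb (pow_pos (zero_lt_one.trans hb) e)
  rwa [← hpow, (O_strictMono hb).lt_iff_lt] at h

theorem O_succ_B (hb : 1 < b) (m : ℕ) : O.{u} (b + 1) (B b m) = O b m := by
  induction m using Nat.strong_induction_on with
  | _ m ih =>
  rcases eq_or_ne m 0 with rfl | hm
  · rw [B_zero, O_zero, O_zero]
  set e := Nat.log b m
  have hpow : 0 < b ^ e := pow_pos (zero_lt_one.trans hb) e
  have he : e < m := Nat.log_lt_self b hm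
  have hrem : m % b ^ e < m := (Nat.mod_lt _ hpow).trans_le (Nat.pow_log_le_self b hm)
  have hremB : B b (m % b ^ e) < (b + 1) ^ B b e := by
    refine lt_pow_of_O_lt_omega0_opow.{u} (by omega) ?_
    rw [ih _ hrem, ih _ he]
    exact O_lt_omega0_opow hb (Nat.mod_lt _ hpow)
  rw [B_of_ne_zero b hm, O_pow_mul_add (by omega) (Nat.div_pow_log_pos hm)
    ((Nat.div_pow_log_lt hb).trans (lt_add_one b)) hremB, ih _ he, ih _ hrem, O_of_ne_zero b hm]

theorem O_succ_B_sub_one_lt (hb : 1 < b) {m : ℕ} (hm : m ≠ 0) :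
    O.{u} (b + 1) (B b m - 1) < O b m := by
  have hO : O.{u} (b + 1) 0 < O (b + 1) (B b m) := by
    rw [O_succ_B hb, O_zero, ← O_zero.{u} b]
    exact O_strictMono hb (Nat.pos_of_ne_zero hm)
  have hB : 0 < B b m := (O_strictMono (by omega)).lt_iff_lt.mp hO
  rw [← O_succ_B hb m]
  exact O_strictMono (by omega) (by omega)

lemma O_L_succ_lt {k : ℕ} (hk : 2 ≤ k) (n : ℕ) (h : L (n + 1) k ≠ 0) :
    O.{u} (k + (n + 1)) (L (n + 2) k) < O (k + n) (L (n + 1) k) :=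
  O_succ_B_sub_one_lt (b := k + n) (by omega) h

/-- **Lemma 8**: for every `k ≥ 2`, the sequence `L · k` terminates: there
exists `n ≥ 1` such that `L n k = 0`. -/
theorem goodstein_lemma8 (k : ℕ) (hk : 2 ≤ k) : ∃ n : ℕ, 1 ≤ n ∧ L n k = 0 := by
  obtain ⟨n, hn⟩ := WellFounded.not_rel_apply_succ (r := (· < ·))
    fun n ↦ O.{0} (k + n) (L (n + 1) k)
  exact ⟨n + 1, by omega, by_contra fun h ↦ hn (O_L_succ_lt hk n h)⟩
end
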